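/- arXiv:1709.08571 — 2 statements merged into one kernel-verified Lean document; each statement's English description precedes it below -/
import Mathlib

section
/- Let f : ℝ^d → ℝ be twice continuously differentiable with L1-Lipschitz gradient and L2-Lipschitz Hessian, let α ∈ (0,1], ε₁ ∈ (0,1), ε₂ = ε₁^α, and let x₀ satisfy f(x₀) − inf f ≤ Δ < ∞. Suppose x₁ = x₀, and for every j there are: a vector g_j with ‖g_j − ∇f(x_j)‖ ≤ ε₄ where 0 ≤ ε₄ ≤ min(ε₁/(2√2), ε₂²/(24·L2)); a symmetric matrix H_j with ‖H_j − ∇²f(x_j)‖₂ ≤ ε₃ where 0 ≤ ε₃ ≤ ε₂/24; and a unit vector v_j with λ_min(H_j) ≥ v_jᵀH_j v_j − max(ε₂, ‖g_j‖^α)/2. The update is: x_{j+1} = x_j − (ε₂/L2)·sign(v_jᵀg_j)·v_j if −(ε₂²/(2·L2²))·v_jᵀH_j v_j − 11·ε₂³/(48·L2²) > ‖g_j‖²/(4·L1) − ε₁²/(8·L1), and x_{j+1} = x_j − (1/L1)·g_j otherwise. Then the first index j* with v_{j*}ᵀH_{j*}v_{j*} > −ε₂/2 and ‖g_{j*}‖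 ≤ ε₁ satisfies j* ≤ 1 + max(48·L2²/ε₂³, 8·L1/ε₁²)·Δ, and at termination ‖∇f(x_{j*})‖ ≤ 2·ε₁ and λ_min(∇²f(x_{j*})) ≥ −2·ε₂. -/
/-! Every iteration that has not stopped decreases `f` by at least
`δ = 1 / max (48 L2² / ε₂³) (8 L1 / ε₁²)`. The negative-curvature step is controlled by the cubic
upper model coming from the Lipschitz Hessian, the gradient step by the quadratic upper model
coming from the Lipschitz gradient, and the update rule picks the step whose guaranteed decrease is
larger; if the stopping test fails, one of the two guarantees is at least `δ`. As `f` can drop by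
at most `Δ`, the test is met within `1 + Δ / δ` iterations, and there the accuracy of `g` and `H`
transfers it to `∇f` and `∇²f`. -/

open scoped RealInnerProductSpace

noncomputable def sgn (t : ℝ) : ℝ := if 0 ≤ t then 1 else -1

open Set

lemma sub_le_sub_of_hasDerivAt_le {φ p φ' p' : ℝ → ℝ} {a b : ℝ} (hab : a ≤ b)
    (hφ : ∀ t, HasDerivAt φ (φ' t) t) (hp : ∀ t, HasDerivAt p (p' t) t)
    (hle : ∀ t ∈ Icc a b, φ' t ≤ p' t) : φ b - φ a ≤ p b - p a := by
  have hmono : MonotoneOn (p - φ) (Icc a b) := by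
    refine monotoneOn_of_deriv_nonneg (convex_Icc a b) ?_ ?_ ?_
    · exact fun t _ => ((hp t).sub (hφ t)).continuousAt.continuousWithinAt
    · exact fun t _ => ((hp t).sub (hφ t)).differentiableAt.differentiableWithinAt
    · intro t ht
      rw [((hp t).sub (hφ t)).deriv, sub_nonneg]
      exact hle t (interior_subset ht)
  have := hmono (left_mem_Icc.2 hab) (right_mem_Icc.2 hab) hab
  simp only [Pi.sub_apply] at this
  linarith

section InnerProduct

variable {E : Type*} [NormedAddCommGroup E] [InnerProductSpace ℝ E]

lemma abs_inner_apply_sub_inner_apply_le (A B : E →L[ℝ] E) (u : E) :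
    |⟪A u, u⟫ - ⟪B u, u⟫| ≤ ‖A - B‖ * ‖u‖ ^ 2 := by
  rw [← inner_sub_left, ← ContinuousLinearMap.sub_apply', sq, ← mul_assoc]
  exact (abs_real_inner_le_norm _ _).trans (by gcongr; exact (A - B).le_opNorm u)

lemma inner_le_inner_add_of_norm_sub_le {a b : E} {ε : ℝ} (h : ‖a - b‖ ≤ ε) (u : E) :
    ⟪b, u⟫ ≤ ⟪a, u⟫ + ε * ‖u‖ := by
  have := (abs_real_inner_le_norm (a - b) u).trans (mul_le_mul_of_nonneg_right h (norm_nonneg u))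
  rw [inner_sub_left] at this
  linarith [(abs_le.mp this).1]

lemma neg_two_mul_le_inner_of_approx {D H : E →L[ℝ] E} {v : E} {ε₂ ε₃ : ℝ} (hε₂ : 0 < ε₂)
    (hε₃ : ε₃ ≤ ε₂ / 24) (hH : ‖H - D‖ ≤ ε₃) (hq : ⟪H v, v⟫ > -ε₂ / 2)
    (hmin : ∀ u, ‖u‖ = 1 → ⟪H u, u⟫ ≥ ⟪H v, v⟫ - ε₂ / 2) {u : E} (hu : ‖u‖ = 1) :
    ⟪D u, u⟫ ≥ -(2 * ε₂) := by
  have := (abs_le.mp (abs_inner_apply_sub_inner_apply_le H D u)).2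
  rw [hu, one_pow, mul_one] at this
  linarith [hmin u hu]

end InnerProduct

section TaylorBounds

variable {E : Type*} [NormedAddCommGroup E] [InnerProductSpace ℝ E] [CompleteSpace E]
  {f : E → ℝ} {L : ℝ}

lemma ContDiff.differentiable_gradient (hf : ContDiff ℝ 2 f) : Differentiable ℝ (gradient f) :=
  ((InnerProductSpace.toDual ℝ E).symm.contDiff.comp
    (hf.fderiv_right (m := 1) (by norm_num))).differentiable (by norm_num)

lemma hasDerivAt_comp_add_smul (hf : Differentiable ℝ f) (y u : E) (t : ℝ) :
    HasDerivAt (fun s : ℝ => f (y + s • u)) ⟪gradient f (y + t • u), u⟫ t := by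
  have hline : HasDerivAt (fun s : ℝ => y + s • u) u t := by
    simpa using ((hasDerivAt_id t).smul_const u).const_add y
  rw [inner_gradient_left]
  exact (hf (y + t • u)).hasFDerivAt.comp_hasDerivAt t hline

lemma hasDerivAt_inner_gradient_comp_add_smul (hf : Differentiable ℝ (gradient f)) (y u : E)
    (t : ℝ) : HasDerivAt (fun s : ℝ => ⟪gradient f (y + s • u), u⟫)
      ⟪fderiv ℝ (gradient f) (y + t • u) u, u⟫ t := by
  have hline : HasDerivAt (fun s : ℝ => y + s • u) u t := by
    simpa using ((hasDerivAt_id t).smul_const u).const_add y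
  simpa using ((hf _).hasFDerivAt.comp_hasDerivAt t hline).inner ℝ (hasDerivAt_const t u)

lemma le_add_inner_gradient_add_sq (hf : Differentiable ℝ f)
    (hlip : ∀ a b, ‖gradient f a - gradient f b‖ ≤ L * ‖a - b‖) (y u : E) :
    f (y + u) ≤ f y + ⟪gradient f y, u⟫ + L / 2 * ‖u‖ ^ 2 := by
  have hslope : ∀ t ∈ Icc (0 : ℝ) 1,
      ⟪gradient f (y + t • u), u⟫ ≤ ⟪gradient f y, u⟫ + L * ‖u‖ ^ 2 * t := by
    intro t ht
    have hdiff : ⟪gradient f (y + t • u) - gradient f y, u⟫ ≤ L * ‖u‖ ^ 2 * t :=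
      calc _ ≤ ‖gradient f (y + t • u) - gradient f y‖ * ‖u‖ := real_inner_le_norm _ _
        _ ≤ L * ‖t • u‖ * ‖u‖ := by
          gcongr; simpa using hlip (y + t • u) y
        _ = L * ‖u‖ ^ 2 * t := by rw [norm_smul, Real.norm_of_nonneg ht.1]; ring
    rw [inner_sub_left] at hdiff
    linarith
  have hmodel : ∀ t, HasDerivAt (fun s => s * ⟪gradient f y, u⟫ + L / 2 * ‖u‖ ^ 2 * s ^ 2)
      (⟪gradient f y, u⟫ + L * ‖u‖ ^ 2 * t) t := fun t =>
    (((hasDerivAt_id' t).mul_const _).add ((hasDerivAt_pow 2 t).const_mul _)).congr_deriv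
      (by push_cast; ring)
  have := sub_le_sub_of_hasDerivAt_le zero_le_one (hasDerivAt_comp_add_smul hf y u) hmodel hslope
  simp only [one_smul, zero_smul, add_zero] at this
  linarith

lemma le_add_inner_gradient_add_inner_hessian_add_cube (hf : Differentiable ℝ f)
    (hf' : Differentiable ℝ (gradient f))
    (hlip : ∀ a b, ‖fderiv ℝ (gradient f) a - fderiv ℝ (gradient f) b‖ ≤ L * ‖a - b‖)
    (y u : E) :
    f (y + u) ≤ f y + ⟪gradient f y, u⟫ + 1 / 2 * ⟪fderiv ℝ (gradient f) y u, u⟫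
      + L / 6 * ‖u‖ ^ 3 := by
  set c := ⟪gradient f y, u⟫
  set Q := ⟪fderiv ℝ (gradient f) y u, u⟫
  have hcurv : ∀ t ∈ Icc (0 : ℝ) 1,
      ⟪fderiv ℝ (gradient f) (y + t • u) u, u⟫ ≤ Q + L * ‖u‖ ^ 3 * t := by
    intro t ht
    have hdiff : ⟪(fderiv ℝ (gradient f) (y + t • u) - fderiv ℝ (gradient f) y) u, u⟫
        ≤ L * ‖u‖ ^ 3 * t :=
      calc _ ≤ ‖fderiv ℝ (gradient f) (y + t • u) - fderiv ℝ (gradient f) y‖ * ‖u‖ * ‖u‖ :=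
            (real_inner_le_norm _ _).trans (by gcongr; exact ContinuousLinearMap.le_opNorm _ _)
        _ ≤ L * ‖t • u‖ * ‖u‖ * ‖u‖ := by
          gcongr; simpa using hlip (y + t • u) y
        _ = L * ‖u‖ ^ 3 * t := by rw [norm_smul, Real.norm_of_nonneg ht.1]; ring
    rw [sub_apply, inner_sub_left] at hdiff
    linarith
  have hslope : ∀ t ∈ Icc (0 : ℝ) 1,
      ⟪gradient f (y + t • u), u⟫ ≤ c + Q * t + L * ‖u‖ ^ 3 / 2 * t ^ 2 := by
    intro t ht
    have hmodel : ∀ s, HasDerivAt (fun s => Q * s + L * ‖u‖ ^ 3 / 2 * s ^ 2)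
        (Q + L * ‖u‖ ^ 3 * s) s := fun s =>
      (((hasDerivAt_id' s).const_mul Q).add ((hasDerivAt_pow 2 s).const_mul _)).congr_deriv
        (by push_cast; ring)
    have := sub_le_sub_of_hasDerivAt_le ht.1 (hasDerivAt_inner_gradient_comp_add_smul hf' y u)
      hmodel fun s hs => hcurv s ⟨hs.1, hs.2.trans ht.2⟩
    simp only [zero_smul, add_zero] at this
    linarith
  have hmodel : ∀ t, HasDerivAt (fun s => c * s + Q / 2 * s ^ 2 + L * ‖u‖ ^ 3 / 6 * s ^ 3)
      (c + Q * t + L * ‖u‖ ^ 3 / 2 * t ^ 2) t := fun t =>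
    ((((hasDerivAt_id' t).const_mul c).add ((hasDerivAt_pow 2 t).const_mul _)).add
      ((hasDerivAt_pow 3 t).const_mul _)).congr_deriv (by push_cast; ring)
  have := sub_le_sub_of_hasDerivAt_le zero_le_one (hasDerivAt_comp_add_smul hf y u) hmodel hslope
  simp only [one_smul, zero_smul, add_zero] at this
  linarith

lemma le_add_inner_add_sq_of_approx (hf : Differentiable ℝ f)
    (hlip : ∀ a b, ‖gradient f a - gradient f b‖ ≤ L * ‖a - b‖) {x g : E} {ε : ℝ}
    (hg : ‖g - gradient f x‖ ≤ ε) (u : E) :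
    f (x + u) ≤ f x + ⟪g, u⟫ + ε * ‖u‖ + L / 2 * ‖u‖ ^ 2 := by
  linarith [le_add_inner_gradient_add_sq hf hlip x u, inner_le_inner_add_of_norm_sub_le hg u]

lemma le_add_inner_add_inner_add_cube_of_approx (hf : Differentiable ℝ f)
    (hf' : Differentiable ℝ (gradient f))
    (hlip : ∀ a b, ‖fderiv ℝ (gradient f) a - fderiv ℝ (gradient f) b‖ ≤ L * ‖a - b‖)
    {x g : E} {H : E →L[ℝ] E} {ε₃ ε₄ : ℝ} (hg : ‖g - gradient f x‖ ≤ ε₄)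
    (hH : ‖H - fderiv ℝ (gradient f) x‖ ≤ ε₃) (u : E) :
    f (x + u) ≤ f x + ⟪g, u⟫ + 1 / 2 * ⟪H u, u⟫ + ε₄ * ‖u‖ + ε₃ / 2 * ‖u‖ ^ 2
      + L / 6 * ‖u‖ ^ 3 := by
  have hquad : ⟪fderiv ℝ (gradient f) x u, u⟫ ≤ ⟪H u, u⟫ + ε₃ * ‖u‖ ^ 2 := by
    have := (abs_le.mp (abs_inner_apply_sub_inner_apply_le H (fderiv ℝ (gradient f) x) u)).1
    have := mul_le_mul_of_nonneg_right hH (sq_nonneg ‖u‖)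
    linarith
  linarith [le_add_inner_gradient_add_inner_hessian_add_cube hf hf' hlip x u,
    inner_le_inner_add_of_norm_sub_le hg u]

end TaylorBounds

lemma sgn_mul_self (t : ℝ) : sgn t * t = |t| := by
  unfold sgn; split_ifs with h
  · rw [one_mul, abs_of_nonneg h]
  · rw [neg_one_mul, abs_of_neg (not_le.mp h)]

lemma abs_sgn (t : ℝ) : |sgn t| = 1 := by
  unfold sgn; split_ifs <;> simp

/- The decreases of `f` guaranteed by the negative-curvature step and by the gradient step; these
are the two sides of the comparison in the update rule. -/
noncomputable def curvatureStepDecrease (L2 ε₂ q : ℝ) : ℝ :=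
  -(ε₂ ^ 2 / (2 * L2 ^ 2)) * q - 11 * ε₂ ^ 3 / (48 * L2 ^ 2)

noncomputable def gradientStepDecrease (L1 ε₁ r : ℝ) : ℝ :=
  r ^ 2 / (4 * L1) - ε₁ ^ 2 / (8 * L1)

section Steps

variable {E : Type*} [NormedAddCommGroup E] [InnerProductSpace ℝ E] [CompleteSpace E]
  {f : E → ℝ} {L1 L2 ε₁ ε₂ ε₃ ε₄ : ℝ} {x g v : E} {H : E →L[ℝ] E}

lemma curvatureStepDecrease_le (hf : Differentiable ℝ f) (hf' : Differentiable ℝ (gradient f))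
    (hHlip : ∀ a b, ‖fderiv ℝ (gradient f) a - fderiv ℝ (gradient f) b‖ ≤ L2 * ‖a - b‖)
    (hL2 : 0 < L2) (hε₂ : 0 ≤ ε₂) (hε₃ : ε₃ ≤ ε₂ / 24) (hε₄ : ε₄ ≤ ε₂ ^ 2 / (24 * L2))
    (hv : ‖v‖ = 1) (hg : ‖g - gradient f x‖ ≤ ε₄)
    (hH : ‖H - fderiv ℝ (gradient f) x‖ ≤ ε₃) :
    curvatureStepDecrease L2 ε₂ ⟪H v, v⟫ ≤ f x - f (x - ((ε₂ / L2) * sgn ⟪g, v⟫) • v) := by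
  set η := ε₂ / L2 with hη
  set s := sgn ⟪g, v⟫
  have hηnn : 0 ≤ η := by positivity
  have hs : |s| = 1 := abs_sgn _
  have hnorm : ‖-(η * s) • v‖ = η := by
    rw [norm_smul, hv, norm_neg, Real.norm_eq_abs, abs_mul, hs, abs_of_nonneg hηnn]; ring
  have hlin : ⟪g, -(η * s) • v⟫ = -(η * |⟪g, v⟫|) := by
    rw [real_inner_smul_right, ← sgn_mul_self]; ring
  have hquad : ⟪H (-(η * s) • v), -(η * s) • v⟫ = η ^ 2 * ⟪H v, v⟫ := by
    rw [map_smul, real_inner_smul_left, real_inner_smul_right]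
    have hs2 : s ^ 2 = 1 := by rw [← sq_abs, hs, one_pow]
    linear_combination (η ^ 2 * ⟪H v, v⟫) * hs2
  have hmodel := le_add_inner_add_inner_add_cube_of_approx hf hf' hHlip hg hH (-(η * s) • v)
  rw [hnorm, hlin, hquad] at hmodel
  rw [show x - (η * s) • v = x + -(η * s) • v by rw [neg_smul, sub_eq_add_neg]]
  have h₄ : ε₄ * η ≤ ε₂ ^ 3 / (24 * L2 ^ 2) :=
    (mul_le_mul_of_nonneg_right hε₄ hηnn).trans_eq (by rw [hη]; field_simp)
  have h₃ : ε₃ / 2 * η ^ 2 ≤ ε₂ ^ 3 / (48 * L2 ^ 2) :=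
    (mul_le_mul_of_nonneg_right (by linarith) (sq_nonneg η)).trans_eq
      (show ε₂ / 48 * η ^ 2 = _ by rw [hη]; field_simp)
  have h₂ : 1 / 2 * (η ^ 2 * ⟪H v, v⟫) = ε₂ ^ 2 / (2 * L2 ^ 2) * ⟪H v, v⟫ := by
    rw [hη]; field_simp
  have h₁ : L2 / 6 * η ^ 3 = ε₂ ^ 3 / (6 * L2 ^ 2) := by rw [hη]; field_simp
  have hsum : ε₂ ^ 3 / (24 * L2 ^ 2) + ε₂ ^ 3 / (48 * L2 ^ 2) + ε₂ ^ 3 / (6 * L2 ^ 2)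
      = 11 * ε₂ ^ 3 / (48 * L2 ^ 2) := by field_simp; ring
  have habs : 0 ≤ η * |⟪g, v⟫| := by positivity
  unfold curvatureStepDecrease
  linarith

lemma gradientStepDecrease_le (hf : Differentiable ℝ f)
    (hglip : ∀ a b, ‖gradient f a - gradient f b‖ ≤ L1 * ‖a - b‖) (hL1 : 0 < L1)
    (hε₄0 : 0 ≤ ε₄) (hε₄ : ε₄ ≤ ε₁ / (2 * √2)) (hg : ‖g - gradient f x‖ ≤ ε₄) :
    gradientStepDecrease L1 ε₁ ‖g‖ ≤ f x - f (x - (1 / L1) • g) := by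
  have hε₄sq : ε₄ ^ 2 ≤ ε₁ ^ 2 / 8 :=
    (pow_le_pow_left₀ hε₄0 hε₄ 2).trans_eq (by
      rw [div_pow, mul_pow, Real.sq_sqrt zero_le_two]; ring)
  have hmodel := le_add_inner_add_sq_of_approx hf hglip hg (-((1 / L1) • g))
  rw [← sub_eq_add_neg, inner_neg_right, real_inner_smul_right,
    real_inner_self_eq_norm_sq, norm_neg, norm_smul, Real.norm_of_nonneg (by positivity)] at hmodel
  have hsq : ‖g‖ ^ 2 / 4 - ε₁ ^ 2 / 8 ≤ ‖g‖ ^ 2 / 2 - ε₄ * ‖g‖ := by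
    nlinarith [sq_nonneg (‖g‖ / 2 - ε₄)]
  calc gradientStepDecrease L1 ε₁ ‖g‖ = (‖g‖ ^ 2 / 4 - ε₁ ^ 2 / 8) / L1 := by
        unfold gradientStepDecrease; ring
    _ ≤ (‖g‖ ^ 2 / 2 - ε₄ * ‖g‖) / L1 := by gcongr
    _ = 1 / L1 * ‖g‖ ^ 2 - ε₄ * (1 / L1 * ‖g‖) - L1 / 2 * (1 / L1 * ‖g‖) ^ 2 := by
        field_simp; ring
    _ ≤ f x - f (x - (1 / L1) • g) := by linarith

lemma max_stepDecrease_le_sub (hf : Differentiable ℝ f) (hf' : Differentiable ℝ (gradient f))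
    (hglip : ∀ a b, ‖gradient f a - gradient f b‖ ≤ L1 * ‖a - b‖)
    (hHlip : ∀ a b, ‖fderiv ℝ (gradient f) a - fderiv ℝ (gradient f) b‖ ≤ L2 * ‖a - b‖)
    (hL1 : 0 < L1) (hL2 : 0 < L2) (hε₂ : 0 ≤ ε₂) (hε₃ : ε₃ ≤ ε₂ / 24) (hε₄0 : 0 ≤ ε₄)
    (hε₄ : ε₄ ≤ min (ε₁ / (2 * √2)) (ε₂ ^ 2 / (24 * L2)))
    (hv : ‖v‖ = 1) (hg : ‖g - gradient f x‖ ≤ ε₄)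
    (hH : ‖H - fderiv ℝ (gradient f) x‖ ≤ ε₃) {x' : E}
    (hx' : x' = if curvatureStepDecrease L2 ε₂ ⟪H v, v⟫ > gradientStepDecrease L1 ε₁ ‖g‖ then
        x - ((ε₂ / L2) * sgn ⟪g, v⟫) • v else x - (1 / L1) • g) :
    max (curvatureStepDecrease L2 ε₂ ⟪H v, v⟫) (gradientStepDecrease L1 ε₁ ‖g‖)
      ≤ f x - f x' := by
  split_ifs at hx' with hcurv <;> subst hx'
  · rw [max_eq_left hcurv.le]
    exact curvatureStepDecrease_le hf hf' hHlip hL2 hε₂ hε₃ (hε₄.trans (min_le_right _ _)) hv hg hH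
  · rw [max_eq_right (not_lt.mp hcurv)]
    exact gradientStepDecrease_le hf hglip hL1 hε₄0 (hε₄.trans (min_le_left _ _)) hg

end Steps

lemma inv_max_le_max_stepDecrease {L1 L2 ε₁ ε₂ q r : ℝ} (hL1 : 0 < L1) (hL2 : 0 < L2)
    (hε₁ : 0 < ε₁) (hε₂ : 0 < ε₂) (h : ¬(q > -ε₂ / 2 ∧ r ≤ ε₁)) :
    (max (48 * L2 ^ 2 / ε₂ ^ 3) (8 * L1 / ε₁ ^ 2))⁻¹
      ≤ max (curvatureStepDecrease L2 ε₂ q) (gradientStepDecrease L1 ε₁ r) := by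
  rcases not_and_or.mp h with hq | hr
  · refine (inv_anti₀ (by positivity) (le_max_left _ _)).trans (le_max_of_le_left ?_)
    have := mul_le_mul_of_nonneg_left (not_lt.mp hq) (by positivity : 0 ≤ ε₂ ^ 2 / (2 * L2 ^ 2))
    rw [inv_div]
    unfold curvatureStepDecrease
    have : ε₂ ^ 2 / (2 * L2 ^ 2) * (-ε₂ / 2) = -(12 * ε₂ ^ 3 / (48 * L2 ^ 2)) := by ring
    have : ε₂ ^ 3 / (48 * L2 ^ 2) = 12 * ε₂ ^ 3 / (48 * L2 ^ 2) - 11 * ε₂ ^ 3 / (48 * L2 ^ 2) := by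
      ring
    linarith
  · refine (inv_anti₀ (by positivity) (le_max_right _ _)).trans (le_max_of_le_right ?_)
    have : ε₁ ^ 2 / (4 * L1) ≤ r ^ 2 / (4 * L1) := by gcongr; exact (not_le.mp hr).le
    rw [inv_div]
    unfold gradientStepDecrease
    linarith [show ε₁ ^ 2 / (4 * L1) = 2 * (ε₁ ^ 2 / (8 * L1)) by ring]

lemma exists_first_index_le_of_decrease {u : ℕ → ℝ} {P : ℕ → Prop} {δ Δ : ℝ} (hδ : 0 < δ)
    (hΔ : ∀ j, u 1 - u j ≤ Δ) (hdec : ∀ j, 1 ≤ j → ¬P j → u (j + 1) ≤ u j - δ) :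
    ∃ j, 1 ≤ j ∧ P j ∧ (∀ i, 1 ≤ i → i < j → ¬P i) ∧ (j : ℝ) ≤ 1 + Δ / δ := by
  classical
  have htelescope : ∀ n, (∀ i, 1 ≤ i → i ≤ n → ¬P i) → n * δ ≤ Δ := by
    suffices ∀ n, (∀ i, 1 ≤ i → i ≤ n → ¬P i) → u (n + 1) ≤ u 1 - n * δ from
      fun n hn => by linarith [this n hn, hΔ (n + 1)]
    intro n
    induction n with
    | zero => simp
    | succ n ih =>
      intro hn
      have := ih fun i hi hin => hn i hi (hin.trans n.le_succ)
      have := hdec (n + 1) n.succ_pos (hn (n + 1) n.succ_pos le_rfl)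
      push_cast
      linarith
  have hex : ∃ j, 1 ≤ j ∧ P j := by
    obtain ⟨n, hn⟩ := exists_nat_gt (Δ / δ)
    by_contra! hnone
    have := htelescope n fun i hi _ => hnone i hi
    rw [div_lt_iff₀ hδ] at hn
    linarith
  refine ⟨Nat.find hex, (Nat.find_spec hex).1, (Nat.find_spec hex).2,
    fun i hi hlt hP => Nat.find_min hex hlt ⟨hi, hP⟩, ?_⟩
  have := htelescope (Nat.find hex - 1) fun i hi hle hP => Nat.find_min hex (by omega) ⟨hi, hP⟩
  rw [Nat.cast_sub (Nat.find_spec hex).1, Nat.cast_one, ← le_div_iff₀ hδ] at this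
  linarith

theorem SNCG_guarantee_general {d : ℕ}
    (f : EuclideanSpace ℝ (Fin d) → ℝ) (L1 L2 α ε₁ ε₂ ε₃ ε₄ Δ : ℝ)
    (hL1 : 0 < L1) (hL2 : 0 < L2)
    (hα : 0 < α)
    (hε₁ : 0 < ε₁)
    (hε₂ : ε₂ = ε₁ ^ α)
    (hε₃ : ε₃ ≤ ε₂ / 24)
    (hε₄0 : 0 ≤ ε₄) (hε₄ : ε₄ ≤ min (ε₁ / (2 * Real.sqrt 2)) (ε₂ ^ 2 / (24 * L2)))
    (hf : ContDiff ℝ 2 f)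
    (hglip : ∀ a b : EuclideanSpace ℝ (Fin d),
      ‖gradient f a - gradient f b‖ ≤ L1 * ‖a - b‖)
    (hHlip : ∀ a b : EuclideanSpace ℝ (Fin d),
      ‖fderiv ℝ (gradient f) a - fderiv ℝ (gradient f) b‖ ≤ L2 * ‖a - b‖)
    (x₀ : EuclideanSpace ℝ (Fin d))
    (hΔ : ∀ z : EuclideanSpace ℝ (Fin d), f x₀ - f z ≤ Δ)
    (x v g : ℕ → EuclideanSpace ℝ (Fin d))
    (H : ℕ → EuclideanSpace ℝ (Fin d) →L[ℝ] EuclideanSpace ℝ (Fin d))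
    (hx1 : x 1 = x₀)
    (hg : ∀ j : ℕ, 1 ≤ j → ‖g j - gradient f (x j)‖ ≤ ε₄)
    (hHapprox : ∀ j : ℕ, 1 ≤ j → ‖H j - fderiv ℝ (gradient f) (x j)‖ ≤ ε₃)
    (hv : ∀ j : ℕ, 1 ≤ j → ‖v j‖ = 1)
    (hmin : ∀ j : ℕ, 1 ≤ j → ∀ u : EuclideanSpace ℝ (Fin d), ‖u‖ = 1 →
      ⟪(H j) u, u⟫ ≥ ⟪(H j) (v j), v j⟫ - max ε₂ (‖g j‖ ^ α) / 2)
    (hupd : ∀ j : ℕ, 1 ≤ j →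
      x (j + 1) =
        if -(ε₂ ^ 2 / (2 * L2 ^ 2)) * ⟪(H j) (v j), v j⟫ - 11 * ε₂ ^ 3 / (48 * L2 ^ 2) >
            ‖g j‖ ^ 2 / (4 * L1) - ε₁ ^ 2 / (8 * L1) then
          x j - ((ε₂ / L2) * sgn ⟪g j, v j⟫) • v j
        else
          x j - (1 / L1) • g j) :
    ∃ jstar : ℕ, 1 ≤ jstar ∧
      (⟪(H jstar) (v jstar), v jstar⟫ > -ε₂ / 2 ∧ ‖g jstar‖ ≤ ε₁) ∧
      (∀ i : ℕ, 1 ≤ i → i < jstar →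
        ¬(⟪(H i) (v i), v i⟫ > -ε₂ / 2 ∧ ‖g i‖ ≤ ε₁)) ∧
      (jstar : ℝ) ≤ 1 + max (48 * L2 ^ 2 / ε₂ ^ 3) (8 * L1 / ε₁ ^ 2) * Δ ∧
      ‖gradient f (x jstar)‖ ≤ 2 * ε₁ ∧
      ∀ u : EuclideanSpace ℝ (Fin d), ‖u‖ = 1 →
        ⟪(fderiv ℝ (gradient f) (x jstar)) u, u⟫ ≥ -(2 * ε₂) := by
  have hε₂pos : 0 < ε₂ := hε₂ ▸ Real.rpow_pos_of_pos hε₁ α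
  have hK : 0 < max (48 * L2 ^ 2 / ε₂ ^ 3) (8 * L1 / ε₁ ^ 2) := lt_max_of_lt_right (by positivity)
  obtain ⟨j, hj, ⟨hq, hgj⟩, hfirst, hjbound⟩ :=
    exists_first_index_le_of_decrease (u := fun j => f (x j))
      (P := fun j => ⟪(H j) (v j), v j⟫ > -ε₂ / 2 ∧ ‖g j‖ ≤ ε₁) (inv_pos.2 hK)
      (fun j => hx1 ▸ hΔ (x j)) fun j hj hP => by
        have := max_stepDecrease_le_sub (hf.differentiable (by norm_num))
          hf.differentiable_gradient hglip hHlip hL1 hL2 hε₂pos.le hε₃ hε₄0 hε₄ (hv j hj)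
          (hg j hj) (hHapprox j hj) (hupd j hj)
        linarith [inv_max_le_max_stepDecrease hL1 hL2 hε₁ hε₂pos hP]
  refine ⟨j, hj, ⟨hq, hgj⟩, hfirst, by rwa [div_inv_eq_mul, mul_comm] at hjbound, ?_, ?_⟩
  · have hε₄ε₁ : ε₄ ≤ ε₁ := (hε₄.trans (min_le_left _ _)).trans
      (div_le_self hε₁.le (by linarith [Real.one_lt_sqrt_two]))
    linarith [norm_le_norm_add_norm_sub (g j) (gradient f (x j)), hg j hj]
  · have hmax : max ε₂ (‖g j‖ ^ α) = ε₂ :=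
      max_eq_left (hε₂ ▸ Real.rpow_le_rpow (norm_nonneg _) hgj hα.le)
    exact fun u hu => neg_two_mul_le_inner_of_approx hε₂pos hε₃ (hHapprox j hj) hq
      (fun w hw => hmax ▸ hmin j hj w hw) hu

/-- Theorem on SNCG: convergence guarantee of the stochastic NCG algorithm,
using sub-sampled gradients `g_j` and sub-sampled Hessians `H_j`. -/
theorem SNCG_guarantee {d : ℕ}
    (f : EuclideanSpace ℝ (Fin d) → ℝ) (L1 L2 α ε₁ ε₂ ε₃ ε₄ Δ : ℝ)
    (hL1 : 0 < L1) (hL2 : 0 < L2)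
    (hα : 0 < α) (hα1 : α ≤ 1)
    (hε₁ : 0 < ε₁) (hε₁1 : ε₁ < 1)
    (hε₂ : ε₂ = ε₁ ^ α)
    (hε₃0 : 0 ≤ ε₃) (hε₃ : ε₃ ≤ ε₂ / 24)
    (hε₄0 : 0 ≤ ε₄) (hε₄ : ε₄ ≤ min (ε₁ / (2 * Real.sqrt 2)) (ε₂ ^ 2 / (24 * L2)))
    (hf : ContDiff ℝ 2 f)
    (hglip : ∀ a b : EuclideanSpace ℝ (Fin d),
      ‖gradient f a - gradient f b‖ ≤ L1 * ‖a - b‖)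
    (hHlip : ∀ a b : EuclideanSpace ℝ (Fin d),
      ‖fderiv ℝ (gradient f) a - fderiv ℝ (gradient f) b‖ ≤ L2 * ‖a - b‖)
    (x₀ : EuclideanSpace ℝ (Fin d))
    (hΔ : ∀ z : EuclideanSpace ℝ (Fin d), f x₀ - f z ≤ Δ)
    (x v g : ℕ → EuclideanSpace ℝ (Fin d))
    (H : ℕ → EuclideanSpace ℝ (Fin d) →L[ℝ] EuclideanSpace ℝ (Fin d))
    (hx1 : x 1 = x₀)
    (hg : ∀ j : ℕ, 1 ≤ j → ‖g j - gradient f (x j)‖ ≤ ε₄)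
    (hHsym : ∀ j : ℕ, 1 ≤ j → ∀ u w : EuclideanSpace ℝ (Fin d),
      ⟪(H j) u, w⟫ = ⟪u, (H j) w⟫)
    (hHapprox : ∀ j : ℕ, 1 ≤ j → ‖H j - fderiv ℝ (gradient f) (x j)‖ ≤ ε₃)
    (hv : ∀ j : ℕ, 1 ≤ j → ‖v j‖ = 1)
    (hmin : ∀ j : ℕ, 1 ≤ j → ∀ u : EuclideanSpace ℝ (Fin d), ‖u‖ = 1 →
      ⟪(H j) u, u⟫ ≥ ⟪(H j) (v j), v j⟫ - max ε₂ (‖g j‖ ^ α) / 2)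
    (hupd : ∀ j : ℕ, 1 ≤ j →
      x (j + 1) =
        if -(ε₂ ^ 2 / (2 * L2 ^ 2)) * ⟪(H j) (v j), v j⟫ - 11 * ε₂ ^ 3 / (48 * L2 ^ 2) >
            ‖g j‖ ^ 2 / (4 * L1) - ε₁ ^ 2 / (8 * L1) then
          x j - ((ε₂ / L2) * sgn ⟪g j, v j⟫) • v j
        else
          x j - (1 / L1) • g j) :
    ∃ jstar : ℕ, 1 ≤ jstar ∧
      (⟪(H jstar) (v jstar), v jstar⟫ > -ε₂ / 2 ∧ ‖g jstar‖ ≤ ε₁) ∧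
      (∀ i : ℕ, 1 ≤ i → i < jstar →
        ¬(⟪(H i) (v i), v i⟫ > -ε₂ / 2 ∧ ‖g i‖ ≤ ε₁)) ∧
      (jstar : ℝ) ≤ 1 + max (48 * L2 ^ 2 / ε₂ ^ 3) (8 * L1 / ε₁ ^ 2) * Δ ∧
      ‖gradient f (x jstar)‖ ≤ 2 * ε₁ ∧
      ∀ u : EuclideanSpace ℝ (Fin d), ‖u‖ = 1 →
        ⟪(fderiv ℝ (gradient f) (x jstar)) u, u⟫ ≥ -(2 * ε₂) :=
  SNCG_guarantee_general f L1 L2 α ε₁ ε₂ ε₃ ε₄ Δ hL1 hL2 hα hε₁ hε₂ hε₃ hε₄0 hε₄ hf hglip hHlip x₀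
    hΔ x v g H hx1 hg hHapprox hv hmin hupd
end

section
/- Let f : ℝ^d → ℝ be differentiable, let L1, L2, ε₁, ε₂ > 0, and for x' ∈ ℝ^d define ρ_{x'}(x) = L1·([‖x − x'‖ − ε₂/L2]_+)², where [t]_+ = max(t, 0). Suppose y, x' ∈ ℝ^d satisfy ‖∇f(y)‖ > ε₁ and ‖∇f(y) + ∇ρ_{x'}(y)‖ ≤ ε₁/2. Then ‖y − x'‖ ≥ ε₂/L2 + ε₁/(4·L1). -/
/-!
Writing c = ε₂/L2, the gradient of ρ_{x'} at y has norm exactly 2·L1·[‖y − x'‖ − c]_+: where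
‖y − x'‖ ≤ c it vanishes because ρ_{x'}(z) ≤ L1·‖z − y‖², and where ‖y − x'‖ > c it is the chain
rule applied to L1·(‖z − x'‖ − c)². The triangle inequality then gives
ε₁ < ‖∇f(y)‖ ≤ ε₁/2 + 2·L1·[‖y − x'‖ − c]_+, so the positive part exceeds ε₁/(4·L1).
-/

open scoped RealInnerProductSpace
open Filter Topology Asymptotics

theorem hasFDerivAt_zero_of_norm_le_sq {𝕜 E F : Type*} [NontriviallyNormedField 𝕜]
    [NormedAddCommGroup E] [NormedSpace 𝕜 E] [NormedAddCommGroup F] [NormedSpace 𝕜 F]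
    {f : E → F} {x : E} {C : ℝ} (hf : ∀ z, ‖f z‖ ≤ C * ‖z - x‖ ^ 2) :
    HasFDerivAt f (0 : E →L[𝕜] F) x := by
  have hfx : f x = 0 := norm_le_zero_iff.mp (by simpa using hf x)
  rw [hasFDerivAt_iff_isLittleO_nhds_zero]
  have hO : (fun h => f (x + h)) =O[𝓝 0] fun h : E => ‖h‖ ^ 2 :=
    IsBigO.of_bound C (Eventually.of_forall fun h => by simpa using hf (x + h))
  simpa [hfx] using hO.trans_isLittleO (isLittleO_norm_pow_id one_lt_two)

section Penalty

variable {E : Type*} [NormedAddCommGroup E] [InnerProductSpace ℝ E] [CompleteSpace E]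

theorem hasGradientAt_norm_sub {x' y : E} (hy : y ≠ x') :
    HasGradientAt (fun z => ‖z - x'‖) (‖y - x'‖⁻¹ • (y - x')) y := by
  have hr : 0 < ‖y - x'‖ := norm_pos_iff.mpr (sub_ne_zero.mpr hy)
  have hsqrt := (Real.hasDerivAt_sqrt (pow_pos hr 2).ne').comp_hasFDerivAt y
    ((hasFDerivAt_id y).sub_const x').norm_sq
  simp only [Function.comp_def, id, Real.sqrt_sq (norm_nonneg _)] at hsqrt
  refine hsqrt.congr_fderiv ?_
  ext v
  simp
  field_simp

/-- The paper's `ρ_{x'}` is `penalty L1 (ε₂ / L2) x'`. -/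
def penalty (L c : ℝ) (x' z : E) : ℝ := L * max (‖z - x'‖ - c) 0 ^ 2

theorem hasGradientAt_penalty_of_le (L : ℝ) {c : ℝ} {x' y : E} (h : ‖y - x'‖ ≤ c) :
    HasGradientAt (penalty L c x') 0 y := by
  rw [hasGradientAt_iff_hasFDerivAt, map_zero]
  refine hasFDerivAt_zero_of_norm_le_sq (C := |L|) fun z => ?_
  have hmax : max (‖z - x'‖ - c) 0 ≤ ‖z - y‖ := by
    have := norm_sub_le_norm_sub_add_norm_sub z y x'
    exact max_le (by linarith) (norm_nonneg _)
  rw [penalty, Real.norm_eq_abs, abs_mul, abs_sq]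
  gcongr

theorem hasGradientAt_penalty_of_lt (L : ℝ) {c : ℝ} (hc : 0 ≤ c) {x' y : E}
    (h : c < ‖y - x'‖) :
    HasGradientAt (penalty L c x') ((2 * L * (‖y - x'‖ - c) / ‖y - x'‖) • (y - x')) y := by
  have hr : 0 < ‖y - x'‖ := hc.trans_lt h
  have hy : y ≠ x' := sub_ne_zero.mp (norm_pos_iff.mp hr)
  have hφ : HasDerivAt (fun t => L * (t - c) ^ 2) (L * (2 * (‖y - x'‖ - c) ^ 1 * 1)) ‖y - x'‖ :=
    (((hasDerivAt_id _).sub_const c).pow 2).const_mul L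
  have hsmooth := hφ.comp_hasFDerivAt y (hasGradientAt_norm_sub hy).hasFDerivAt
  have heq : penalty L c x' =ᶠ[𝓝 y] fun z => L * (‖z - x'‖ - c) ^ 2 := by
    filter_upwards [(continuous_norm.comp (continuous_sub_right x')).continuousAt.eventually
      (lt_mem_nhds h)] with z (hz : c < ‖z - x'‖)
    simp only [penalty, max_eq_left (sub_nonneg.mpr hz.le)]
  rw [hasGradientAt_iff_hasFDerivAt]
  refine (hsmooth.congr_of_eventuallyEq heq).congr_fderiv ?_
  ext v
  simp
  field_simp

theorem norm_gradient_penalty (L : ℝ) {c : ℝ} (hc : 0 ≤ c) (x' y : E) :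
    ‖gradient (penalty L c x') y‖ = 2 * |L| * max (‖y - x'‖ - c) 0 := by
  rcases le_or_gt ‖y - x'‖ c with hle | hlt
  · rw [(hasGradientAt_penalty_of_le L hle).gradient, max_eq_right (sub_nonpos.mpr hle)]
    simp
  · have hr : 0 < ‖y - x'‖ := hc.trans_lt hlt
    rw [(hasGradientAt_penalty_of_lt L hc hlt).gradient, norm_smul,
      max_eq_left (sub_nonneg.mpr hlt.le), Real.norm_eq_abs, abs_div, abs_mul, abs_mul,
      abs_of_pos hr, abs_of_pos (sub_pos.mpr hlt)]
    field_simp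
    ring

end Penalty

theorem far_from_center_of_penalty_general {d : ℕ}
    (f : EuclideanSpace ℝ (Fin d) → ℝ) (L1 L2 ε₁ ε₂ : ℝ)
    (hL1 : 0 < L1) (hL2 : 0 < L2) (hε₁ : 0 < ε₁) (hε₂ : 0 < ε₂)
    (y x' : EuclideanSpace ℝ (Fin d))
    (hbig : ‖gradient f y‖ > ε₁)
    (hsmall : ‖gradient f y +
      gradient (fun z : EuclideanSpace ℝ (Fin d) =>
        L1 * (max (‖z - x'‖ - ε₂ / L2) 0) ^ 2) y‖ ≤ ε₁ / 2) :
    ‖y - x'‖ ≥ ε₂ / L2 + ε₁ / (4 * L1) := by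
  change ‖gradient f y + gradient (penalty L1 (ε₂ / L2) x') y‖ ≤ ε₁ / 2 at hsmall
  have hρ := norm_gradient_penalty L1 (by positivity : 0 ≤ ε₂ / L2) x' y
  rw [abs_of_pos hL1] at hρ
  have htri := norm_le_add_norm_add (gradient f y) (gradient (penalty L1 (ε₂ / L2) x') y)
  have hgap : ε₁ / (4 * L1) < max (‖y - x'‖ - ε₂ / L2) 0 := by
    rw [div_lt_iff₀ (by positivity)]
    linarith
  have hgap' : ε₁ / (4 * L1) < ‖y - x'‖ - ε₂ / L2 :=
    (lt_max_iff.mp hgap).resolve_right (not_lt.mpr (by positivity))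
  linarith

/-- if at `y` the gradient of `f` is large but the gradient of the penalized
function `f + ρ_{x'}` is small, then `y` is far from `x'`. -/
theorem far_from_center_of_penalty {d : ℕ}
    (f : EuclideanSpace ℝ (Fin d) → ℝ) (L1 L2 ε₁ ε₂ : ℝ)
    (hL1 : 0 < L1) (hL2 : 0 < L2) (hε₁ : 0 < ε₁) (hε₂ : 0 < ε₂)
    (hdiff : Differentiable ℝ f)
    (y x' : EuclideanSpace ℝ (Fin d))
    (hbig : ‖gradient f y‖ > ε₁)
    (hsmall : ‖gradient f y +
      gradient (fun z : EuclideanSpace ℝ (Fin d) =>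
        L1 * (max (‖z - x'‖ - ε₂ / L2) 0) ^ 2) y‖ ≤ ε₁ / 2) :
    ‖y - x'‖ ≥ ε₂ / L2 + ε₁ / (4 * L1) :=
  far_from_center_of_penalty_general f L1 L2 ε₁ ε₂ hL1 hL2 hε₁ hε₂ y x' hbig hsmall
end
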